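/- If X ~ ESBIII(c,k,ε) with c > 2, then Var(X) = (k/2) B(1-2/c, 2/c+k)(2 + 6ε²) - 4ε²k² B(1-1/c, 1/c+k)². -/

import Mathlib

/-!
On each half-line the ESBIII density is half a Burr III density `c k y^(-c-1) (1 + y^(-c))^(-k-1)`,
rescaled by `1 + ε` on the right and by `1 - ε` on the left. The substitutions `u = y^(-c)` and
`u = t⁻¹ - 1` turn the Burr III moments into Beta integrals, so that for `n < c`
`E Xⁿ = (k/2) B(1 - n/c, n/c + k) ((1 + ε)^(n+1) + (-1)ⁿ (1 - ε)^(n+1))`.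
The variance is `E X² - (E X)²` with these values for `n = 2` and `n = 1`.
-/

open Real

/-- sign function with sign(0) = 1, as in the paper. -/
noncomputable def sgn (x : ℝ) : ℝ := if x < 0 then -1 else 1

/-- ESBIII density. -/
noncomputable def esbiiiPdf (c k ε : ℝ) (x : ℝ) : ℝ :=
  (c * k / 2) * ((sgn x * x) / (1 + sgn x * ε)) ^ (-(c + 1)) *
    (1 + ((sgn x * x) / (1 + sgn x * ε)) ^ (-c)) ^ (-(k + 1))

open Set MeasureTheory ProbabilityTheory

lemma integral_Ioo_rpow_mul_one_sub_rpow {α β : ℝ} (hα : 0 < α) (hβ : 0 < β) :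
    ∫ x in Ioo 0 1, x ^ (α - 1) * (1 - x) ^ (β - 1) = beta α β := by
  rw [beta_eq_betaIntegralReal α β hα hβ, Complex.betaIntegral,
    intervalIntegral.integral_of_le zero_le_one, integral_Ioc_eq_integral_Ioo,
    ← RCLike.re_to_complex, ← integral_re]
  · refine setIntegral_congr_fun measurableSet_Ioo fun x ⟨hx₀, hx₁⟩ ↦ ?_
    norm_cast
    rw [← Complex.ofReal_cpow hx₀.le, ← Complex.ofReal_cpow (by linarith), RCLike.re_to_complex,
      Complex.re_mul_ofReal, Complex.ofReal_re]
  · exact (Complex.betaIntegral_convergent (by simpa) (by simpa)).1.mono_set Ioo_subset_Ioc_self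

lemma integral_Ioi_rpow_mul_one_add_rpow {α β : ℝ} (hα : 0 < α) (hβ : 0 < β) :
    ∫ u in Ioi 0, u ^ (α - 1) * (1 + u) ^ (-(α + β)) = beta α β := by
  have himage : (fun t : ℝ ↦ t⁻¹ - 1) '' Ioo 0 1 = Ioi 0 := by
    ext u
    refine ⟨fun ⟨t, ⟨ht₀, ht₁⟩, hu⟩ ↦ ?_, fun hu ↦ ⟨(1 + u)⁻¹, ⟨?_, ?_⟩, ?_⟩⟩
    · rw [← hu, mem_Ioi, sub_pos]
      exact one_lt_inv_iff₀.2 ⟨ht₀, ht₁⟩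
    · have hu : (0 : ℝ) < u := hu
      positivity
    · exact inv_lt_one_of_one_lt₀ (by simpa using hu)
    · simp
  have hderiv : ∀ t ∈ Ioo (0 : ℝ) 1,
      HasDerivWithinAt (fun t ↦ t⁻¹ - 1) (-(t ^ 2)⁻¹) (Ioo 0 1) t :=
    fun t ht ↦ ((hasDerivAt_inv ht.1.ne').sub_const 1).hasDerivWithinAt
  have hinj : InjOn (fun t : ℝ ↦ t⁻¹ - 1) (Ioo 0 1) :=
    fun s _ t _ h ↦ inv_injective (sub_left_injective h)
  have hsymm : beta α β = beta β α := by unfold beta; rw [mul_comm, add_comm]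
  rw [← himage, integral_image_eq_integral_abs_deriv_smul measurableSet_Ioo hderiv hinj, hsymm,
    ← integral_Ioo_rpow_mul_one_sub_rpow hβ hα]
  refine setIntegral_congr_fun measurableSet_Ioo fun t ⟨ht₀, ht₁⟩ ↦ ?_
  have h1t : 0 < 1 - t := by linarith
  have hsplit : t⁻¹ - 1 = (1 - t) * t⁻¹ := by field_simp
  have hexp : t ^ (β - 1) * t ^ (α - 1) * t ^ 2 = t ^ (α + β) := by
    rw [← rpow_natCast, ← rpow_add ht₀, ← rpow_add ht₀]
    ring_nf
  rw [smul_eq_mul, abs_neg, abs_of_pos (by positivity), add_sub_cancel, hsplit,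
    mul_rpow h1t.le (by positivity), inv_rpow ht₀.le, rpow_neg (by positivity), inv_rpow ht₀.le,
    inv_inv, ← hexp]
  field_simp

noncomputable def burrIIIPdf (c k y : ℝ) : ℝ :=
  c * k * y ^ (-(c + 1)) * (1 + y ^ (-c)) ^ (-(k + 1))

lemma integral_Ioi_rpow_mul_burrIIIPdf {c k n : ℝ} (hc : 0 < c) (hnc : n < c)
    (hnk : 0 < n / c + k) :
    ∫ y in Ioi 0, y ^ n * burrIIIPdf c k y = k * beta (1 - n / c) (n / c + k) := by
  have ha : 0 < 1 - n / c := by rwa [sub_pos, div_lt_one hc]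
  rw [← integral_Ioi_rpow_mul_one_add_rpow ha hnk, ← integral_const_mul,
    ← integral_comp_rpow_Ioi
      (fun u ↦ k * (u ^ (1 - n / c - 1) * (1 + u) ^ (-(1 - n / c + (n / c + k)))))
      (neg_ne_zero.2 hc.ne')]
  refine setIntegral_congr_fun measurableSet_Ioi fun y (hy : 0 < y) ↦ ?_
  have hpow : (y ^ (-c)) ^ (1 - n / c - 1) = y ^ n := by
    rw [← rpow_mul hy.le]
    congr 1
    field_simp
    ring
  rw [hpow, burrIIIPdf, smul_eq_mul, abs_neg, abs_of_pos hc,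
    show -(1 - n / c + (n / c + k)) = -(k + 1) by ring, show -c - 1 = -(c + 1) by ring]
  ring

lemma integral_Ioi_rpow_mul_comp_div {s : ℝ} (hs : 0 < s) (n : ℝ) (g : ℝ → ℝ) :
    ∫ x in Ioi 0, x ^ n * g (x / s) = s ^ (n + 1) * ∫ y in Ioi 0, y ^ n * g y := by
  have hscale := integral_comp_mul_left_Ioi (fun y ↦ y ^ n * g y) 0 (inv_pos.2 hs)
  rw [mul_zero, inv_inv, smul_eq_mul] at hscale
  rw [rpow_add_one hs.ne', mul_assoc, ← hscale, ← integral_const_mul]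
  refine setIntegral_congr_fun measurableSet_Ioi fun x (hx : 0 < x) ↦ ?_
  rw [mul_rpow (by positivity) hx.le, inv_rpow hs.le, inv_mul_eq_div]
  field_simp

lemma integral_Ioi_pow_mul_burrIIIPdf_div {c k s : ℝ} (n : ℕ) (hnc : (n : ℝ) < c) (hk : 0 < k)
    (hs : 0 < s) :
    ∫ x in Ioi 0, x ^ n * burrIIIPdf c k (x / s) =
      s ^ (n + 1) * k * beta (1 - n / c) (n / c + k) := by
  have hc : 0 < c := lt_of_le_of_lt n.cast_nonneg hnc
  have := integral_Ioi_rpow_mul_comp_div hs n (burrIIIPdf c k)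
  rw [integral_Ioi_rpow_mul_burrIIIPdf hc hnc (by positivity), ← Nat.cast_add_one] at this
  simpa only [rpow_natCast, mul_assoc] using this

lemma esbiiiPdf_of_nonneg {c k ε x : ℝ} (hx : 0 ≤ x) :
    esbiiiPdf c k ε x = burrIIIPdf c k (x / (1 + ε)) / 2 := by
  rw [esbiiiPdf, burrIIIPdf, sgn, if_neg hx.not_gt]
  ring_nf

lemma esbiiiPdf_neg_of_pos {c k ε x : ℝ} (hx : 0 < x) :
    esbiiiPdf c k ε (-x) = burrIIIPdf c k (x / (1 - ε)) / 2 := by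
  rw [esbiiiPdf, burrIIIPdf, sgn, if_pos (neg_neg_iff_pos.2 hx)]
  ring_nf

lemma integral_eq_integral_Ioi_comp_neg_add_integral_Ioi {f : ℝ → ℝ}
    (hneg : IntegrableOn (fun x ↦ f (-x)) (Ioi 0)) (hpos : IntegrableOn f (Ioi 0)) :
    ∫ x, f x = (∫ x in Ioi 0, f (-x)) + ∫ x in Ioi 0, f x := by
  have hIic : IntegrableOn f (Iic 0) := by
    rw [← (Measure.measurePreserving_neg volume).integrableOn_comp_preimage
      (Homeomorph.neg ℝ).measurableEmbedding]
    simpa [Function.comp_def, integrableOn_Ici_iff_integrableOn_Ioi] using hneg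
  rw [integral_comp_neg_Ioi 0 f, neg_zero, intervalIntegral.integral_Iic_add_Ioi hIic hpos]

section

variable {c k ε : ℝ}

lemma integral_Ioi_pow_mul_esbiiiPdf (n : ℕ) (hnc : (n : ℝ) < c) (hk : 0 < k) (hε : -1 < ε) :
    ∫ x in Ioi 0, x ^ n * esbiiiPdf c k ε x =
      (1 + ε) ^ (n + 1) * (k / 2) * beta (1 - n / c) (n / c + k) := by
  rw [setIntegral_congr_fun measurableSet_Ioi fun x (hx : 0 < x) ↦ by
      rw [esbiiiPdf_of_nonneg hx.le, mul_div_assoc'],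
    integral_div, integral_Ioi_pow_mul_burrIIIPdf_div n hnc hk (by linarith)]
  ring

lemma integral_Ioi_pow_mul_esbiiiPdf_neg (n : ℕ) (hnc : (n : ℝ) < c) (hk : 0 < k) (hε : ε < 1) :
    ∫ x in Ioi 0, x ^ n * esbiiiPdf c k ε (-x) =
      (1 - ε) ^ (n + 1) * (k / 2) * beta (1 - n / c) (n / c + k) := by
  rw [setIntegral_congr_fun measurableSet_Ioi fun x (hx : 0 < x) ↦ by
      rw [esbiiiPdf_neg_of_pos hx, mul_div_assoc'],
    integral_div, integral_Ioi_pow_mul_burrIIIPdf_div n hnc hk (by linarith)]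
  ring

lemma integral_pow_mul_esbiiiPdf (n : ℕ) (hnc : (n : ℝ) < c) (hk : 0 < k)
    (hε : ε ∈ Ioo (-1 : ℝ) 1) :
    ∫ x, x ^ n * esbiiiPdf c k ε x =
      ((-1) ^ n * (1 - ε) ^ (n + 1) + (1 + ε) ^ (n + 1)) * (k / 2) *
        beta (1 - n / c) (n / c + k) := by
  obtain ⟨hε₁, hε₂⟩ := hε
  have hc : 0 < c := n.cast_nonneg.trans_lt hnc
  have hB : 0 < beta (1 - n / c) (n / c + k) :=
    beta_pos (by rwa [sub_pos, div_lt_one hc]) (by positivity)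
  have h1m : 0 < 1 - ε := by linarith
  have h1p : 0 < 1 + ε := by linarith
  have hpos := integral_Ioi_pow_mul_esbiiiPdf n hnc hk hε₁
  have hneg : ∫ x in Ioi 0, (-x) ^ n * esbiiiPdf c k ε (-x) =
      (-1) ^ n * ((1 - ε) ^ (n + 1) * (k / 2) * beta (1 - n / c) (n / c + k)) := by
    have hsign : ∀ x : ℝ,
        (-x) ^ n * esbiiiPdf c k ε (-x) = (-1) ^ n * (x ^ n * esbiiiPdf c k ε (-x)) :=
      fun x ↦ by rw [neg_pow]; ring
    simp_rw [hsign, integral_const_mul, integral_Ioi_pow_mul_esbiiiPdf_neg n hnc hk hε₂]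
  -- A nonzero Bochner integral certifies integrability.
  rw [integral_eq_integral_Ioi_comp_neg_add_integral_Ioi (.of_integral_ne_zero ?_)
      (.of_integral_ne_zero ?_), hneg, hpos]
  · ring
  · rw [hneg]
    exact mul_ne_zero (pow_ne_zero n (neg_ne_zero.2 one_ne_zero)) (by positivity)
  · rw [hpos]
    positivity

end

/-- Variance of the ESBIII distribution for c > 2. -/
theorem esbiii_variance (c k ε : ℝ) (hc : 2 < c) (hk : 0 < k)
    (hε : ε ∈ Set.Ioo (-1 : ℝ) 1) :
    (∫ x : ℝ, x ^ 2 * esbiiiPdf c k ε x) - (∫ x : ℝ, x * esbiiiPdf c k ε x) ^ 2 =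
      (k / 2) *
          (Real.Gamma (1 - 2 / c) * Real.Gamma (2 / c + k) /
            Real.Gamma ((1 - 2 / c) + (2 / c + k))) * (2 + 6 * ε ^ 2) -
        4 * ε ^ 2 * k ^ 2 *
          (Real.Gamma (1 - 1 / c) * Real.Gamma (1 / c + k) /
            Real.Gamma ((1 - 1 / c) + (1 / c + k))) ^ 2 := by
  have hsecond := integral_pow_mul_esbiiiPdf (c := c) 2 (by norm_num [hc]) hk hε
  have hfirst := integral_pow_mul_esbiiiPdf (c := c) 1 (by norm_num; linarith) hk hε
  simp only [pow_one, Nat.cast_ofNat, Nat.cast_one] at hsecond hfirst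
  rw [hsecond, hfirst]
  unfold beta
  ring
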